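/- Let (g₁,δ₁),…,(g_n,δ_n) be Lie bialgebras, (g, δ_g) their direct product Lie bialgebra, and t ∈ ∧²g a mixed twisting element (i.e., δ_g(t) + ½[t,t] = 0 and p_j(t) = 0 for each projection p_j: g → g_j). Then for each subset J = {j₁ < ⋯ < j_k} ⊂ {1,…,n}, p_J(t) is a mixed twisting element for the direct product Lie bialgebra g_J = g_{j₁} ⊕ ⋯ ⊕ g_{j_k}, and p_J: (g, δ_{g,t}) → (g_J, δ_{g_J, p_J(t)}) is a Lie bialgebra homomorphism, where δ_{g,t}(x) = δ_g(x) − [x,t] denotes the twisted cobracket. -/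

import Mathlib

set_option linter.unusedSectionVars false

noncomputable section

open LinearMap

variable {k : Type*} [Field k] [CharZero k]
variable {ι : Type*} [Fintype ι] [DecidableEq ι]
variable {G : ι → Type*} [∀ i, LieRing (G i)] [∀ i, LieAlgebra k (G i)]
  [∀ i, FiniteDimensional k (G i)]

namespace Paper

/-- The componentwise adjoint operator of the direct product Lie algebra `g = Π G i`. -/
def brP (x : ∀ i, G i) : (∀ i, G i) →ₗ[k] (∀ i, G i) where
  toFun y := fun i => ⁅x i, y i⁆
  map_add' y z := by funext i; simp
  map_smul' c y := by funext i; simp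

/-- Projection of `g = Π G i` onto the components in `J`. -/
def PJ (J : Finset ι) : (∀ i, G i) →ₗ[k] (∀ i, G i) where
  toFun x := fun i => if i ∈ J then x i else 0
  map_add' x y := by funext i; by_cases h : i ∈ J <;> simp [h]
  map_smul' c x := by funext i; by_cases h : i ∈ J <;> simp [h]

/-- Skewness of a 2-tensor on `g`, encoded by its sharp map. -/
def IsSkewP (T : Module.Dual k (∀ i, G i) →ₗ[k] (∀ i, G i)) : Prop :=
  ∀ ξ η : Module.Dual k (∀ i, G i), ξ (T η) = - η (T ξ)

/-- `ad_x` applied to a 2-tensor (sharp map `T`). -/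
def adActP (x : ∀ i, G i) (T : Module.Dual k (∀ i, G i) →ₗ[k] (∀ i, G i)) :
    Module.Dual k (∀ i, G i) →ₗ[k] (∀ i, G i) :=
  brP x ∘ₗ T + T ∘ₗ (brP x).dualMap

/-- The bracket on `g*` dual to the cobracket `D`. -/
def dualBrP (D : (∀ i, G i) →ₗ[k] (Module.Dual k (∀ i, G i) →ₗ[k] (∀ i, G i)))
    (ξ η : Module.Dual k (∀ i, G i)) : Module.Dual k (∀ i, G i) :=
  ξ ∘ₗ (D.flip η)

/-- `½[t,t]` as a trilinear form, `T = t^#`. -/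
def halfSchP (T : Module.Dual k (∀ i, G i) →ₗ[k] (∀ i, G i))
    (ξ η ζ : Module.Dual k (∀ i, G i)) : k :=
  ξ (brP (k := k) (T η) (T ζ)) + η (brP (k := k) (T ζ) (T ξ)) + ζ (brP (k := k) (T ξ) (T η))

/-- The extension of a cobracket `D` to `∧²g`, as a trilinear form on a skew 2-tensor. -/
def deltaExtP (D : (∀ i, G i) → (Module.Dual k (∀ i, G i) →ₗ[k] (∀ i, G i)))
    (T : Module.Dual k (∀ i, G i) →ₗ[k] (∀ i, G i))
    (ξ η ζ : Module.Dual k (∀ i, G i)) : k :=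
  -(ξ (D (T ζ) η) + η (D (T ξ) ζ) + ζ (D (T η) ξ))

end Paper

open Paper

section Aux

lemma PJ_apply (J : Finset ι) (x : ∀ i, G i) (i : ι) :
    PJ (k := k) J x i = if i ∈ J then x i else 0 := rfl

lemma brP_apply (x y : ∀ i, G i) (i : ι) :
    brP (k := k) x y i = ⁅x i, y i⁆ := rfl

lemma dualMap_eq_comp (f : (∀ i, G i) →ₗ[k] (∀ i, G i)) (φ : Module.Dual k (∀ i, G i)) :
    f.dualMap φ = φ ∘ₗ f := rfl

lemma PJ_PJ (J : Finset ι) (x : ∀ i, G i) :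
    PJ (k := k) J (PJ (k := k) J x) = PJ (k := k) J x := by
  funext j; by_cases h : j ∈ J <;> simp [PJ_apply, h]

lemma PJ_single_PJ (J : Finset ι) (i : ι) (x : ∀ i, G i) :
    PJ (k := k) {i} (PJ (k := k) J x) = if i ∈ J then PJ (k := k) {i} x else 0 := by
  funext j
  by_cases hj : j = i
  · subst hj
    by_cases hi : j ∈ J <;> simp [PJ_apply, hi]
  · by_cases hi : i ∈ J <;>
      simp [PJ_apply, hj, hi, apply_ite (fun f : ∀ i, G i => f j)]

lemma PJ_PJ_single (J : Finset ι) (i : ι) (x : ∀ i, G i) :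
    PJ (k := k) J (PJ (k := k) {i} x) = if i ∈ J then PJ (k := k) {i} x else 0 := by
  funext j
  by_cases hj : j = i
  · subst hj
    by_cases hi : j ∈ J <;> simp [PJ_apply, hi]
  · by_cases hi : i ∈ J <;>
      simp [PJ_apply, hj, hi, apply_ite (fun f : ∀ i, G i => f j)]

lemma single_comp_PJ (J : Finset ι) (i : ι) :
    PJ (k := k) (G := G) {i} ∘ₗ PJ (k := k) J = if i ∈ J then PJ (k := k) {i} else 0 := by
  refine LinearMap.ext fun x => ?_
  rw [comp_apply, PJ_single_PJ]
  by_cases hi : i ∈ J <;> simp [hi]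

lemma PJ_comp_single (J : Finset ι) (i : ι) :
    PJ (k := k) (G := G) J ∘ₗ PJ (k := k) {i} = if i ∈ J then PJ (k := k) {i} else 0 := by
  refine LinearMap.ext fun x => ?_
  rw [comp_apply, PJ_PJ_single]
  by_cases hi : i ∈ J <;> simp [hi]

lemma sum_PJ_single (x : ∀ i, G i) :
    ∑ i : ι, PJ (k := k) {i} x = x := by
  funext j
  rw [Finset.sum_apply]
  simp [PJ_apply, Finset.mem_singleton]

lemma PJ_eq_sum (J : Finset ι) (x : ∀ i, G i) :
    PJ (k := k) J x = ∑ i ∈ J, PJ (k := k) {i} x := by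
  funext j
  rw [Finset.sum_apply]
  simp [PJ_apply, Finset.mem_singleton]

lemma PJ_brP (J : Finset ι) (x y : ∀ i, G i) :
    PJ (k := k) J (brP (k := k) x y) = brP (k := k) (PJ (k := k) J x) (PJ (k := k) J y) := by
  funext j; by_cases h : j ∈ J <;> simp [PJ_apply, brP_apply, h]

lemma PJ_comp_brP (J : Finset ι) (x : ∀ i, G i) :
    PJ (k := k) J ∘ₗ brP (k := k) x = brP (k := k) (PJ (k := k) J x) ∘ₗ PJ (k := k) J := by
  refine LinearMap.ext fun y => ?_
  simp only [comp_apply]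
  rw [PJ_brP]

lemma lemB (D : (∀ i, G i) →ₗ[k] (Module.Dual k (∀ i, G i) →ₗ[k] (∀ i, G i)))
    (hDprod : ∀ (i : ι) (x : ∀ i, G i) (ξ : Module.Dual k (∀ i, G i)),
        D (PJ (k := k) {i} x) ξ = PJ (k := k) {i} (D x (ξ ∘ₗ PJ (k := k) {i})))
    (J : Finset ι) (x : ∀ i, G i) (ξ : Module.Dual k (∀ i, G i)) :
    PJ (k := k) J (D x (ξ ∘ₗ PJ (k := k) J)) = D (PJ (k := k) J x) (ξ ∘ₗ PJ (k := k) J) := by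
  have hcomp : ∀ i : ι, (ξ ∘ₗ PJ (k := k) J) ∘ₗ PJ (k := k) {i}
      = if i ∈ J then ξ ∘ₗ PJ (k := k) {i} else 0 := by
    intro i
    rw [comp_assoc, PJ_comp_single]
    by_cases hi : i ∈ J <;> simp [hi]
  have e1 : D x (ξ ∘ₗ PJ (k := k) J) = ∑ i ∈ J, PJ (k := k) {i} (D x (ξ ∘ₗ PJ (k := k) {i})) := by
    conv_lhs => rw [← sum_PJ_single (k := k) x]
    rw [map_sum, LinearMap.sum_apply]
    simp only [hDprod, hcomp]
    have hterm : ∀ i : ι, PJ (k := k) {i} (D x (if i ∈ J then ξ ∘ₗ PJ (k := k) {i} else 0))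
        = if i ∈ J then PJ (k := k) {i} (D x (ξ ∘ₗ PJ (k := k) {i})) else 0 := by
      intro i; by_cases hi : i ∈ J <;> simp [hi]
    simp only [hterm]
    simp [Finset.sum_ite_mem]
  have e2 : D (PJ (k := k) J x) (ξ ∘ₗ PJ (k := k) J)
      = ∑ i ∈ J, PJ (k := k) {i} (D x (ξ ∘ₗ PJ (k := k) {i})) := by
    conv_lhs => rw [PJ_eq_sum]
    rw [map_sum, LinearMap.sum_apply]
    refine Finset.sum_congr rfl fun i hi => ?_
    rw [hDprod, hcomp]
    simp [hi]
  rw [e1, map_sum, e2]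
  refine Finset.sum_congr rfl fun i hi => ?_
  rw [PJ_PJ_single]
  simp [hi]

lemma lemB' (D : (∀ i, G i) →ₗ[k] (Module.Dual k (∀ i, G i) →ₗ[k] (∀ i, G i)))
    (hDprod : ∀ (i : ι) (x : ∀ i, G i) (ξ : Module.Dual k (∀ i, G i)),
        D (PJ (k := k) {i} x) ξ = PJ (k := k) {i} (D x (ξ ∘ₗ PJ (k := k) {i})))
    (J : Finset ι) (x : ∀ i, G i) (ξ : Module.Dual k (∀ i, G i)) :
    PJ (k := k) J (D (PJ (k := k) J x) (ξ ∘ₗ PJ (k := k) J)) = PJ (k := k) J (D x (ξ ∘ₗ PJ (k := k) J)) := by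
  rw [lemB D hDprod, PJ_PJ, ← lemB D hDprod]

end Aux

/-- Let `(g_i, δ_i)` be Lie bialgebras and `(g, δ_g)` their direct
product Lie bialgebra (cobracket sharp maps `D x`, assumed componentwise), and let
`t ∈ ∧²g` (sharp `T`) be a mixed twisting element: `δ_g(t) + ½[t,t] = 0` and
`p_i(t) = 0` for each factor.  Then for every subset `J ⊆ {1,…,n}`, `p_J(t)` is a mixed
twisting element of the direct product Lie bialgebra `g_J` (with cobracket
`δ_J = p_J ∘ δ_g ∘ p_J`), and `p_J : (g, δ_{g,t}) → (g_J, δ_{g_J, p_J t})` is a Lie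
bialgebra homomorphism, where `δ_{g,t}(x) = δ_g(x) − [x,t]`. -/
theorem statement9
    (D : (∀ i, G i) →ₗ[k] (Module.Dual k (∀ i, G i) →ₗ[k] (∀ i, G i)))
    -- `(g, δ_g)` is a Lie bialgebra:
    (hDskew : ∀ x, IsSkewP (D x))
    (hDcoc : ∀ x y : ∀ i, G i, D (fun i => ⁅x i, y i⁆)
        = ((brP x) ∘ₗ D y + D y ∘ₗ (brP x).dualMap)
          - ((brP y) ∘ₗ D x + D x ∘ₗ (brP y).dualMap))
    (hDalt : ∀ ξ, dualBrP D ξ ξ = 0)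
    (hDjac : ∀ ξ η ζ, dualBrP D (dualBrP D ξ η) ζ + dualBrP D (dualBrP D η ζ) ξ
        + dualBrP D (dualBrP D ζ ξ) η = 0)
    -- the cobracket is the direct product cobracket (componentwise):
    (hDprod : ∀ (i : ι) (x : ∀ i, G i) (ξ : Module.Dual k (∀ i, G i)),
        D (PJ (k := k) {i} x) ξ = PJ (k := k) {i} (D x (ξ ∘ₗ PJ {i})))
    -- `t` is a mixed twisting element:
    (T : Module.Dual k (∀ i, G i) →ₗ[k] (∀ i, G i)) (hTskew : IsSkewP T)
    (hTtwist : ∀ ξ η ζ, deltaExtP (fun x => D x) T ξ η ζ + halfSchP T ξ η ζ = 0)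
    (hTmixed : ∀ i : ι, PJ {i} ∘ₗ T ∘ₗ (PJ {i}).dualMap = 0) :
    ∀ J : Finset ι,
      -- `p_J(t)` is a mixed twisting element of `(g_J, δ_{g_J})`:
      (IsSkewP (PJ J ∘ₗ T ∘ₗ (PJ J).dualMap)) ∧
      (∀ i : ι, PJ {i} ∘ₗ (PJ J ∘ₗ T ∘ₗ (PJ J).dualMap) ∘ₗ (PJ {i}).dualMap = 0) ∧
      (∀ ξ η ζ, deltaExtP (fun x => PJ J ∘ₗ (D (PJ (k := k) J x)) ∘ₗ (PJ J).dualMap)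
            (PJ J ∘ₗ T ∘ₗ (PJ J).dualMap) ξ η ζ
          + halfSchP (PJ J ∘ₗ T ∘ₗ (PJ J).dualMap) ξ η ζ = 0) ∧
      -- `p_J` is a Lie algebra homomorphism:
      (∀ x y : ∀ i, G i,
        PJ (k := k) J (fun i => ⁅x i, y i⁆)
          = fun i => ⁅(PJ (k := k) J x) i, (PJ (k := k) J y) i⁆) ∧
      -- `p_J` intertwines the twisted cobrackets `δ_{g,t}` and `δ_{g_J, p_J(t)}`:
      (∀ x : ∀ i, G i,
        PJ J ∘ₗ (D x - adActP x T) ∘ₗ (PJ J).dualMap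
          = (PJ J ∘ₗ (D (PJ (k := k) J (PJ (k := k) J x))) ∘ₗ (PJ J).dualMap)
            - adActP (PJ (k := k) J x) (PJ J ∘ₗ T ∘ₗ (PJ J).dualMap)) := by
  intro J
  refine ⟨?_, ?_, ?_, ?_, ?_⟩
  · -- skewness of `p_J(t)`
    intro ξ η
    have h := hTskew (ξ ∘ₗ PJ J) (η ∘ₗ PJ J)
    simpa [comp_apply, dualMap_eq_comp] using h
  · -- mixedness of `p_J(t)`
    intro i
    refine LinearMap.ext fun ξ => ?_
    simp only [comp_apply, LinearMap.zero_apply, dualMap_eq_comp]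
    by_cases hi : i ∈ J
    · have harg : (ξ ∘ₗ PJ (k := k) {i}) ∘ₗ PJ J = ξ ∘ₗ PJ {i} := by
        rw [comp_assoc, single_comp_PJ]; simp [hi]
      rw [harg, PJ_single_PJ]
      have h0 : (PJ (k := k) {i} ∘ₗ T ∘ₗ (PJ {i}).dualMap) ξ = 0 := by
        rw [hTmixed i]; rfl
      simp only [comp_apply, dualMap_eq_comp] at h0
      simp [hi, h0]
    · rw [PJ_single_PJ]
      simp [hi]
  · -- `p_J(t)` is a twisting element for `(g_J, δ_J)`
    intro ξ η ζ
    have key := hTtwist (ξ ∘ₗ PJ J) (η ∘ₗ PJ J) (ζ ∘ₗ PJ J)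
    simp only [deltaExtP, halfSchP, comp_apply, dualMap_eq_comp] at key ⊢
    simp only [PJ_PJ, lemB' D hDprod J, ← PJ_brP]
    exact key
  · -- `p_J` is a Lie algebra homomorphism
    intro x y
    funext j
    by_cases h : j ∈ J <;> simp [PJ_apply, h]
  · -- `p_J` intertwines the twisted cobrackets
    intro x
    refine LinearMap.ext fun ξ => ?_
    simp only [comp_apply, LinearMap.sub_apply, map_sub, adActP, LinearMap.add_apply, dualMap_eq_comp,
      PJ_PJ, map_add]
    simp only [lemB' D hDprod J]
    congr 1
    have harg : (ξ ∘ₗ PJ (k := k) J) ∘ₗ brP (k := k) x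
        = (ξ ∘ₗ brP (k := k) (PJ (k := k) J x)) ∘ₗ PJ J := by
      rw [comp_assoc, comp_assoc, PJ_comp_brP]
    rw [harg, PJ_brP]
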